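/- arXiv:math/0502241 — 4 statements merged into one kernel-verified Lean document; each statement's English description precedes it below -/
import Mathlib

section
/- Let B be a von Neumann algebra on a complex Hilbert space G, let E ⊆ B(G,H) be a concrete von Neumann B-module, and let ρ' : B' → B(H) be its commutant lifting. Then E = {y ∈ B(G,H) : ρ'(b') ∘ y = y ∘ b' for all b' ∈ B'}, i.e., E coincides with the space of intertwiners of ρ' and the identity representation of B'. -/
noncomputable section

variable {G H K : Type*}
  [NormedAddCommGroup G] [InnerProductSpace ℂ G] [CompleteSpace G]
  [NormedAddCommGroup H] [InnerProductSpace ℂ H] [CompleteSpace H]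
  [NormedAddCommGroup K] [InnerProductSpace ℂ K] [CompleteSpace K]

/-- The weak operator topology on `G →L[ℂ] H`: the coarsest topology making all the maps
`T ↦ ⟨h, T g⟩` continuous. -/
def wot (G H : Type*) [NormedAddCommGroup G] [InnerProductSpace ℂ G]
    [NormedAddCommGroup H] [InnerProductSpace ℂ H] : TopologicalSpace (G →L[ℂ] H) :=
  ⨅ p : G × H, TopologicalSpace.induced
    (fun T : G →L[ℂ] H => (inner ℂ p.2 (T p.1) : ℂ)) inferInstance

/-- The set `{x g : x ∈ E, g ∈ G}` spans a dense subspace of `H`. -/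
def SpansDensely (E : Set (G →L[ℂ] H)) : Prop :=
  Dense ((Submodule.span ℂ {h : H | ∃ x ∈ E, ∃ g : G, x g = h} : Submodule ℂ H) : Set H)

/-- `E ⊆ B(G,H)` is a concrete von Neumann `B`-module: a complex linear subspace, stable under
composition with elements of `B` from the right, with `x* ∘ y ∈ B` for all `x, y ∈ E`, acting
nondegenerately on `G`, and closed in the weak operator topology. -/
structure IsConcreteVNModule (B : VonNeumannAlgebra G) (E : Set (G →L[ℂ] H)) : Prop where
  zero_mem : (0 : G →L[ℂ] H) ∈ E
  add_mem : ∀ x ∈ E, ∀ y ∈ E, x + y ∈ E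
  smul_mem : ∀ (c : ℂ), ∀ x ∈ E, c • x ∈ E
  comp_mem : ∀ x ∈ E, ∀ b ∈ B, x.comp b ∈ E
  adjoint_comp_mem : ∀ x ∈ E, ∀ y ∈ E, (ContinuousLinearMap.adjoint x).comp y ∈ B
  dense : SpansDensely E
  isClosed : @IsClosed _ (wot G H) E

/-- A map `ρ : B(G) → B(H)` restricts on the subset `S ⊆ B(G)` to a normal unital
`*`-homomorphism: it is linear, multiplicative and star-preserving on `S`, unital, and its
restriction to the closed unit ball of `S` is continuous from the weak operator topology of
`B(G)` to the weak operator topology of `B(H)`. -/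
structure IsNormalUnitalStarHom (S : Set (G →L[ℂ] G)) (ρ : (G →L[ℂ] G) → (H →L[ℂ] H)) :
    Prop where
  map_add : ∀ a ∈ S, ∀ b ∈ S, ρ (a + b) = ρ a + ρ b
  map_smul : ∀ (c : ℂ), ∀ a ∈ S, ρ (c • a) = c • ρ a
  map_mul : ∀ a ∈ S, ∀ b ∈ S, ρ (a * b) = ρ a * ρ b
  map_star : ∀ a ∈ S, ρ (star a) = star (ρ a)
  map_one : ρ 1 = 1
  normal : @Continuous {b : G →L[ℂ] G // b ∈ S ∧ ‖b‖ ≤ 1} (H →L[ℂ] H)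
    (TopologicalSpace.induced (fun b => b.1) (wot G G)) (wot H H) (fun b => ρ b.1)

/-- The space of intertwiners: `x ∈ B(G,H)` with `ρ(b') ∘ x = x ∘ b'` for all `b' ∈ S`. -/
def intertwinerSpace (S : Set (G →L[ℂ] G)) (ρ : (G →L[ℂ] G) → (H →L[ℂ] H)) :
    Set (G →L[ℂ] H) :=
  {x | ∀ b' ∈ S, (ρ b').comp x = x.comp b'}


/-!
For `x ∈ E` the lifting property gives `x* ∘ ρ'(b') = b' ∘ x*` on the dense span of the ranges
of `E`, so for an intertwiner `y` every `x* ∘ y` commutes with `B'` and lies in `B'' = B`.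
Given `g₁, …, gₙ ∈ G`, the operators `x ∘ x*` (`x ∈ E`), acting diagonally on `Hⁿ`, then map
`(y gᵢ)ᵢ` into the closure `V` of `{(x gᵢ)ᵢ : x ∈ E}`. This family is closed under adjoints,
leaves `V` invariant and has no common kernel, which forces `(y gᵢ)ᵢ ∈ V`. Thus `y` lies in the
strong, hence the weak, closure of `E`, which is `E`.
-/

open scoped ComplexInnerProductSpace
open ContinuousLinearMap

theorem Submodule.mem_of_forall_apply_mem {𝕜 W : Type*} [RCLike 𝕜] [NormedAddCommGroup W]
    [InnerProductSpace 𝕜 W] [CompleteSpace W] (V : Submodule 𝕜 W) [V.HasOrthogonalProjection]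
    (S : Set (W →L[𝕜] W)) (hS_adjoint : ∀ T ∈ S, adjoint T ∈ S)
    (hS_mapsTo : ∀ T ∈ S, ∀ v ∈ V, T v ∈ V) (hS_sep : ∀ w : W, (∀ T ∈ S, T w = 0) → w = 0)
    {ξ : W} (hξ : ∀ T ∈ S, T ξ ∈ V) : ξ ∈ V := by
  set μ := ξ - V.starProjection ξ
  have hμ : μ ∈ Vᗮ := V.sub_starProjection_mem_orthogonal ξ
  suffices μ = 0 by
    rw [sub_eq_zero.mp this]
    exact V.starProjection_apply_mem ξ
  refine hS_sep μ fun T hT => ?_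
  have h_mem : T μ ∈ V :=
    map_sub T _ _ ▸ V.sub_mem (hξ T hT) (hS_mapsTo T hT _ (V.starProjection_apply_mem ξ))
  have h_orth : T μ ∈ Vᗮ := fun v hv => by
    rw [← adjoint_inner_left]
    exact (Submodule.mem_orthogonal _ _).mp hμ _ (hS_mapsTo _ (hS_adjoint T hT) v hv)
  exact (Submodule.mem_bot 𝕜).mp ((Submodule.inf_orthogonal_eq_bot V).le ⟨h_mem, h_orth⟩)

namespace PiLp

variable {𝕜 : Type*} [RCLike 𝕜] {ι : Type*}

def diagonal {E : Type*} [NormedAddCommGroup E] [NormedSpace 𝕜 E] (T : E →L[𝕜] E) :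
    PiLp 2 (fun _ : ι => E) →L[𝕜] PiLp 2 (fun _ : ι => E) :=
  (PiLp.continuousLinearEquiv 2 𝕜 _).symm.toContinuousLinearMap ∘L
    (piMap fun _ => T) ∘L (PiLp.continuousLinearEquiv 2 𝕜 _).toContinuousLinearMap

@[simp]
theorem diagonal_apply {E : Type*} [NormedAddCommGroup E] [NormedSpace 𝕜 E] (T : E →L[𝕜] E)
    (v : PiLp 2 (fun _ : ι => E)) (i : ι) : diagonal T v i = T (v i) := rfl

theorem adjoint_diagonal {E : Type*} [NormedAddCommGroup E] [InnerProductSpace 𝕜 E]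
    [CompleteSpace E] [Fintype ι] (T : E →L[𝕜] E) :
    adjoint (diagonal (ι := ι) T) = diagonal (adjoint T) := by
  refine ((eq_adjoint_iff _ _).mpr fun u v => ?_).symm
  simp only [PiLp.inner_apply, diagonal_apply, adjoint_inner_left]

end PiLp

theorem SpansDensely.eq_zero_of_forall_apply_adjoint_apply {E : Set (G →L[ℂ] H)}
    (hE : SpansDensely E) {v : H} (hv : ∀ x ∈ E, x (adjoint x v) = 0) : v = 0 := by
  have h_adjoint : ∀ x ∈ E, adjoint x v = 0 := fun x hx => by
    rw [← inner_self_eq_zero (𝕜 := ℂ), adjoint_inner_left, hv x hx, inner_zero_right]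
  refine hE.eq_zero_of_inner_right ℂ fun u hu => ?_
  suffices Submodule.span ℂ {h : H | ∃ x ∈ E, ∃ g : G, x g = h} ≤ (ℂ ∙ v)ᗮ from
    Submodule.mem_orthogonal_singleton_iff_inner_left.mp (this hu)
  refine Submodule.span_le.mpr ?_
  rintro _ ⟨x, hx, g, rfl⟩
  rw [SetLike.mem_coe, Submodule.mem_orthogonal_singleton_iff_inner_left, ← adjoint_inner_right,
    h_adjoint x hx, inner_zero_right]

def evalTuple {ι : Type*} (g : ι → G) : (G →L[ℂ] H) →ₗ[ℂ] PiLp 2 (fun _ : ι => H) where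
  toFun T := WithLp.toLp 2 fun i => T (g i)
  map_add' _ _ := rfl
  map_smul' _ _ := rfl

theorem evalTuple_mem_topologicalClosure_map {B : Set (G →L[ℂ] G)}
    {E : Submodule ℂ (G →L[ℂ] H)} (hEB : ∀ x ∈ E, ∀ b ∈ B, x ∘L b ∈ E)
    (hBE : ∀ x ∈ E, ∀ z ∈ E, adjoint x ∘L z ∈ B) (hE : SpansDensely (E : Set (G →L[ℂ] H)))
    {y : G →L[ℂ] H} (hy : ∀ x ∈ E, adjoint x ∘L y ∈ B) {ι : Type*} [Fintype ι] (g : ι → G) :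
    evalTuple g y ∈ (E.map (evalTuple g)).topologicalClosure := by
  set V := (E.map (evalTuple g)).topologicalClosure
  have : CompleteSpace V := (E.map (evalTuple g)).isClosed_topologicalClosure.completeSpace_coe
  have h_image : ∀ x ∈ E, ∀ z, adjoint x ∘L z ∈ B →
      PiLp.diagonal (x ∘L adjoint x) (evalTuple g z) ∈ E.map (evalTuple g) := fun x hx z hz =>
    ⟨x ∘L (adjoint x ∘L z), hEB x hx _ hz, rfl⟩
  refine V.mem_of_forall_apply_mem
    ((fun x => PiLp.diagonal (x ∘L adjoint x)) '' (E : Set (G →L[ℂ] H))) ?_ ?_ ?_ ?_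
  · rintro _ ⟨x, hx, rfl⟩
    exact ⟨x, hx, by rw [PiLp.adjoint_diagonal, adjoint_comp, adjoint_adjoint]⟩
  · rintro _ ⟨x, hx, rfl⟩ v hv
    rw [← SetLike.mem_coe, Submodule.topologicalClosure_coe] at hv ⊢
    refine map_mem_closure (PiLp.diagonal _).continuous hv ?_
    rintro _ ⟨z, hz, rfl⟩
    exact h_image x hx z (hBE x hx z hz)
  · intro w hw
    ext i
    exact hE.eq_zero_of_forall_apply_adjoint_apply fun x hx => congr($(hw _ ⟨x, hx, rfl⟩) i)
  · rintro _ ⟨x, hx, rfl⟩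
    exact (E.map (evalTuple g)).le_topologicalClosure (h_image x hx y (hy x hx))

section CommutantLifting

variable {B : VonNeumannAlgebra G} {E : Set (G →L[ℂ] H)} {ρ' : (G →L[ℂ] G) → (H →L[ℂ] H)}

theorem adjoint_comp_lifting (hBE : ∀ x ∈ E, ∀ z ∈ E, adjoint x ∘L z ∈ B)
    (hE : SpansDensely E) (hρ : ∀ b' ∈ B.commutant, ∀ x ∈ E, ρ' b' ∘L x = x ∘L b')
    {x : G →L[ℂ] H} (hx : x ∈ E) {b' : G →L[ℂ] G} (hb' : b' ∈ B.commutant) :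
    adjoint x ∘L ρ' b' = b' ∘L adjoint x := by
  refine ext_on hE ?_
  rintro _ ⟨z, hz, g, rfl⟩
  have h_lift : ρ' b' (z g) = z (b' g) := congr($(hρ b' hb' z hz) g)
  have h_comm := VonNeumannAlgebra.mem_commutant_iff.mp hb' _ (hBE x hx z hz)
  simpa [h_lift] using congr($h_comm g)

theorem adjoint_comp_mem_of_intertwines (hBE : ∀ x ∈ E, ∀ z ∈ E, adjoint x ∘L z ∈ B)
    (hE : SpansDensely E) (hρ : ∀ b' ∈ B.commutant, ∀ x ∈ E, ρ' b' ∘L x = x ∘L b')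
    {y : G →L[ℂ] H} (hy : ∀ b' ∈ B.commutant, ρ' b' ∘L y = y ∘L b')
    {x : G →L[ℂ] H} (hx : x ∈ E) : adjoint x ∘L y ∈ B := by
  rw [← B.commutant_commutant, VonNeumannAlgebra.mem_commutant_iff]
  intro b' hb'
  calc b' * (adjoint x ∘L y) = adjoint x ∘L ρ' b' ∘L y := by
        rw [← comp_assoc, adjoint_comp_lifting hBE hE hρ hx hb']; rfl
    _ = (adjoint x ∘L y) * b' := by rw [hy b' hb']; rfl

end CommutantLifting

open Topology in
theorem mem_closure_iInf_induced_of_forall_finset {X ι : Type*} {Y : ι → Type*}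
    [∀ i, TopologicalSpace (Y i)] (f : ∀ i, X → Y i) {s : Set X} {x : X}
    (h : ∀ F : Finset ι, (fun i : F => f i x) ∈ closure ((fun z (i : F) => f i z) '' s)) :
    x ∈ @closure X (⨅ i, TopologicalSpace.induced (f i) inferInstance) s := by
  let _ : TopologicalSpace X := ⨅ i, TopologicalSpace.induced (f i) inferInstance
  have h_ind : IsInducing fun z i => f i z :=
    ⟨by simp only [Pi.topologicalSpace, induced_iInf, induced_compose]; rfl⟩
  rw [h_ind.closure_eq_preimage_closure_image, Set.mem_preimage, mem_closure_iff_nhds]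
  intro U hU
  rw [nhds_pi, Filter.mem_pi'] at hU
  obtain ⟨F, t, ht, hFU⟩ := hU
  obtain ⟨_, h_pi, z, hz, rfl⟩ := mem_closure_iff_nhds.mp (h F) (Set.univ.pi fun i : F => t i)
    (set_pi_mem_nhds Set.finite_univ fun i _ => ht i)
  exact ⟨_, hFU fun i hi => h_pi ⟨i, hi⟩ trivial, z, hz, rfl⟩

def IsConcreteVNModule.toSubmodule {B : VonNeumannAlgebra G} {E : Set (G →L[ℂ] H)}
    (hE : IsConcreteVNModule B E) : Submodule ℂ (G →L[ℂ] H) where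
  carrier := E
  add_mem' hx hy := hE.add_mem _ hx _ hy
  zero_mem' := hE.zero_mem
  smul_mem' c _ hx := hE.smul_mem c _ hx

/-- a concrete von Neumann `B`-module coincides with the intertwiner space of its
commutant lifting. -/
theorem stmt3 (B : VonNeumannAlgebra G) (E : Set (G →L[ℂ] H))
    (hE : IsConcreteVNModule B E)
    (ρ' : (G →L[ℂ] G) → (H →L[ℂ] H))
    (hρ : ∀ b' ∈ B.commutant, ∀ x ∈ E, (ρ' b').comp x = x.comp b') :
    E = {y : G →L[ℂ] H | ∀ b' ∈ B.commutant, (ρ' b').comp y = y.comp b'} := by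
  refine Set.Subset.antisymm (fun x hx b' hb' => hρ b' hb' x hx) fun y hy => ?_
  have hyB : ∀ x ∈ E, adjoint x ∘L y ∈ B := fun x hx =>
    adjoint_comp_mem_of_intertwines hE.adjoint_comp_mem hE.dense hρ hy hx
  refine @IsClosed.closure_subset _ (wot G H) E hE.isClosed y
    (mem_closure_iInf_induced_of_forall_finset _ fun F => ?_)
  have h_strong := evalTuple_mem_topologicalClosure_map (E := hE.toSubmodule) hE.comp_mem
    hE.adjoint_comp_mem hE.dense hyB fun p : F => p.1.1
  refine map_mem_closure (f := fun v (p : F) => ⟪p.1.2, v p⟫) (by fun_prop) h_strong ?_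
  rintro _ ⟨x, hx, rfl⟩
  exact ⟨x, hx, rfl⟩
end
end

section
/- Let B be a von Neumann algebra on a complex Hilbert space G, let E ⊆ B(G,H) be a concrete von Neumann B-module, and let ρ' : B' → B(H) be its commutant lifting. Then {a ∈ B(H) : a∘x ∈ E and a*∘x ∈ E for all x ∈ E} = {a ∈ B(H) : a ρ'(b') = ρ'(b') a for all b' ∈ B'}; that is, the algebra of adjointable operators of E, realized inside B(H), equals the commutant of ρ'(B') in B(H). -/
noncomputable section

variable {G H K : Type*}
  [NormedAddCommGroup G] [InnerProductSpace ℂ G] [CompleteSpace G]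
  [NormedAddCommGroup H] [InnerProductSpace ℂ H] [CompleteSpace H]
  [NormedAddCommGroup K] [InnerProductSpace ℂ K] [CompleteSpace K]

/-! The commutant `ρ'(B')'` is a `*`-algebra because `ρ'` is `*`-preserving, and an operator
commuting with `ρ'(B')` maps `E` into the space of intertwiners `{w | ρ'(b') ∘ w = w ∘ b'}`;
the converse inclusion is density of `{x g}`. So everything rests on: every intertwiner `w`
lies in `E`.

For `z ∈ E` one has `z* ∘ w ∈ B = B''`. Fix `g₁, …, gₙ ∈ G` and let `V ⊆ Hⁿ` be the subspace of
the tuples `(y gᵢ)ᵢ`, `y ∈ E`. The diagonal operator `z z*` maps `V` into itself and `(w gᵢ)ᵢ`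
into `V`, so the component `η` of `(w gᵢ)ᵢ` orthogonal to `V` satisfies `⟪η, z z* η⟫ = 0`,
i.e. `z* ηᵢ = 0` for every `z ∈ E`, whence `η = 0` by nondegeneracy. Thus `w` is a strong, hence
weak, limit of elements of `E`, and `E` is weakly closed. -/

open ContinuousLinearMap

namespace SpansDensely

variable {X Y : Type*} [NormedAddCommGroup X] [InnerProductSpace ℂ X]
  [NormedAddCommGroup Y] [InnerProductSpace ℂ Y] {E : Set (X →L[ℂ] Y)}

theorem eq_zero_of_forall_adjoint_apply_eq_zero [CompleteSpace X] [CompleteSpace Y]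
    (hE : SpansDensely E) {v : Y} (hv : ∀ z ∈ E, adjoint z v = 0) : v = 0 := by
  have hvE : innerSL ℂ v = 0 := ContinuousLinearMap.ext_on hE <| by
    rintro _ ⟨z, hz, g, rfl⟩
    rw [innerSL_apply_apply, ← adjoint_inner_left, hv z hz, inner_zero_left, zero_apply]
  simpa using congr($hvE v)

theorem ext_comp (hE : SpansDensely E) {F : Type*} [NormedAddCommGroup F] [NormedSpace ℂ F]
    {T S : Y →L[ℂ] F} (h : ∀ x ∈ E, T ∘L x = S ∘L x) : T = S := by
  refine ContinuousLinearMap.ext_on hE ?_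
  rintro _ ⟨x, hx, g, rfl⟩
  exact DFunLike.congr_fun (h x hx) g

theorem ext_adjoint_comp [CompleteSpace X] [CompleteSpace Y] (hE : SpansDensely E)
    {F : Type*} [NormedAddCommGroup F] [NormedSpace ℂ F] {u v : F →L[ℂ] Y}
    (h : ∀ z ∈ E, adjoint z ∘L u = adjoint z ∘L v) : u = v := by
  ext f
  rw [← sub_eq_zero]
  refine hE.eq_zero_of_forall_adjoint_apply_eq_zero fun z hz => ?_
  rw [map_sub, sub_eq_zero]
  exact DFunLike.congr_fun (h z hz) f

theorem commute_of_comp_mem (hE : SpansDensely E) {S : Set (X →L[ℂ] X)}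
    {ρ : (X →L[ℂ] X) → (Y →L[ℂ] Y)} (hρ : E ⊆ intertwinerSpace S ρ) {a : Y →L[ℂ] Y}
    (ha : ∀ x ∈ E, a ∘L x ∈ E) :
    ∀ b' ∈ S, Commute a (ρ b') := fun b' hb' =>
  hE.ext_comp fun x hx => by
    rw [mul_def, mul_def, comp_assoc, hρ hx b' hb', ← comp_assoc, ← hρ (ha x hx) b' hb',
      comp_assoc]

end SpansDensely

section Intertwiners

variable {X Y : Type*} [NormedAddCommGroup X] [InnerProductSpace ℂ X]
  [NormedAddCommGroup Y] [InnerProductSpace ℂ Y] {S : Set (X →L[ℂ] X)}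
  {ρ : (X →L[ℂ] X) → (Y →L[ℂ] Y)}

theorem comp_mem_intertwinerSpace {a : Y →L[ℂ] Y} (ha : ∀ b' ∈ S, Commute a (ρ b'))
    {x : X →L[ℂ] Y} (hx : x ∈ intertwinerSpace S ρ) : a ∘L x ∈ intertwinerSpace S ρ :=
  fun b' hb' => by rw [← comp_assoc, ← mul_def, ← (ha b' hb').eq, mul_def, comp_assoc, hx b' hb',
    comp_assoc]

end Intertwiners

section Diagonal

variable {ι X Y : Type*} [NormedAddCommGroup X] [InnerProductSpace ℂ X]
  [NormedAddCommGroup Y] [InnerProductSpace ℂ Y]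

variable (ι) in
def diagonalOp (A : X →L[ℂ] Y) : PiLp 2 (fun _ : ι => X) →L[ℂ] PiLp 2 (fun _ : ι => Y) :=
  (PiLp.continuousLinearEquiv 2 ℂ _).symm.toContinuousLinearMap ∘L
    ContinuousLinearMap.piMap (fun _ => A) ∘L
      (PiLp.continuousLinearEquiv 2 ℂ _).toContinuousLinearMap

@[simp]
theorem diagonalOp_apply (A : X →L[ℂ] Y) (v : PiLp 2 (fun _ : ι => X)) (i : ι) :
    diagonalOp ι A v i = A (v i) := rfl

theorem adjoint_diagonalOp [Fintype ι] [CompleteSpace X] [CompleteSpace Y] (A : X →L[ℂ] Y) :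
    adjoint (diagonalOp ι A) = diagonalOp ι (adjoint A) := by
  refine ((eq_adjoint_iff _ _).mpr fun v u => ?_).symm
  simp only [PiLp.inner_apply, diagonalOp_apply, adjoint_inner_left]

end Diagonal

def tupleEval {ι X Y : Type*} [NormedAddCommGroup X] [NormedAddCommGroup Y] [NormedSpace ℂ X]
    [NormedSpace ℂ Y] (g : ι → X) : (X →L[ℂ] Y) →ₗ[ℂ] PiLp 2 (fun _ : ι => Y) where
  toFun y := WithLp.toLp 2 fun i => y (g i)
  map_add' _ _ := rfl
  map_smul' _ _ := rfl

@[simp]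
theorem tupleEval_apply {ι X Y : Type*} [NormedAddCommGroup X] [NormedAddCommGroup Y]
    [NormedSpace ℂ X] [NormedSpace ℂ Y] (g : ι → X) (y : X →L[ℂ] Y) (i : ι) :
    tupleEval g y i = y (g i) := rfl

open Topology in
theorem mem_closure_wot_of_forall_finite {X Y : Type*} [NormedAddCommGroup X]
    [InnerProductSpace ℂ X] [NormedAddCommGroup Y] [InnerProductSpace ℂ Y]
    {E : Set (X →L[ℂ] Y)} {w : X →L[ℂ] Y}
    (h : ∀ s : Set X, s.Finite → ∀ δ > 0, ∃ y ∈ E, ∀ x ∈ s, ‖y x - w x‖ < δ) :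
    w ∈ closure[wot X Y] E := by
  let f (p : X × Y) (T : X →L[ℂ] Y) : ℂ := inner ℂ p.2 (T p.1)
  have hnhds : @nhds _ (wot X Y) w = ⨅ p, Filter.comap (f p) (𝓝 (f p w)) := by
    rw [wot, nhds_iInf]
    simp only [nhds_induced, f]
  rw [@mem_closure_iff_nhds_basis _ (wot X Y) _ _ _ _ _
    (hnhds ▸ Filter.HasBasis.iInf' fun p => Metric.nhds_basis_ball.comap (f p))]
  rintro ⟨I, ε⟩ ⟨hI, hε⟩
  have hsmall : ∀ᶠ δ in 𝓝[>] (0 : ℝ), ∀ p ∈ I, δ * (‖p.2‖ + 1) < ε p := by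
    refine (Filter.eventually_all_finite hI).mpr fun p hp => ?_
    exact nhdsWithin_le_nhds <| ((continuous_mul_const _).tendsto' 0 0 (zero_mul _)).eventually
      (eventually_lt_nhds (hε p hp))
  obtain ⟨δ, hδε, hδ⟩ := (hsmall.and self_mem_nhdsWithin).exists
  obtain ⟨y, hy, hyw⟩ := h _ (hI.image Prod.fst) δ hδ
  refine ⟨y, hy, Set.mem_iInter₂.mpr fun p hp => ?_⟩
  calc dist (f p y) (f p w) = ‖inner ℂ p.2 (y p.1 - w p.1)‖ := by
        rw [dist_eq_norm, inner_sub_right]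
    _ ≤ ‖p.2‖ * ‖y p.1 - w p.1‖ := norm_inner_le_norm _ _
    _ ≤ δ * (‖p.2‖ + 1) := by
        nlinarith [norm_nonneg p.2, norm_nonneg (y p.1 - w p.1), hyw p.1 ⟨p, hp, rfl⟩]
    _ < ε p := hδε p hp

namespace IsConcreteVNModule

variable {B : VonNeumannAlgebra G} {E : Set (G →L[ℂ] H)} {ρ' : (G →L[ℂ] G) → (H →L[ℂ] H)}

theorem adjoint_lifting_eq_lifting_star (hE : IsConcreteVNModule B E)
    (hρ : E ⊆ intertwinerSpace B.commutant ρ') {b' : G →L[ℂ] G} (hb' : b' ∈ B.commutant) :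
    adjoint (ρ' b') = ρ' (star b') := by
  have hsb' : star b' ∈ B.commutant := star_mem hb'
  refine hE.dense.ext_comp fun x hx => hE.dense.ext_adjoint_comp fun y hy => ?_
  have hyx : star b' * (adjoint y ∘L x) = adjoint y ∘L x * star b' :=
    (VonNeumannAlgebra.mem_commutant_iff.mp hsb' _ (hE.adjoint_comp_mem y hy x hx)).symm
  calc adjoint y ∘L adjoint (ρ' b') ∘L x = adjoint (ρ' b' ∘L y) ∘L x := by
        rw [adjoint_comp, comp_assoc]
    _ = star b' * (adjoint y ∘L x) := by
        rw [hρ hy b' hb', adjoint_comp, comp_assoc, star_eq_adjoint]; rfl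
    _ = adjoint y ∘L ρ' (star b') ∘L x := by
        rw [hyx, hρ hx _ hsb']; rfl

theorem adjoint_comp_mem_of_mem_intertwinerSpace (hE : IsConcreteVNModule B E)
    (hρ : E ⊆ intertwinerSpace B.commutant ρ') {w : G →L[ℂ] H}
    (hw : w ∈ intertwinerSpace B.commutant ρ') {z : G →L[ℂ] H} (hz : z ∈ E) :
    adjoint z ∘L w ∈ B := by
  rw [← B.commutant_commutant, VonNeumannAlgebra.mem_commutant_iff]
  intro b' hb'
  have hzb' : b' ∘L adjoint z = adjoint z ∘L ρ' b' := by
    rw [← adjoint_adjoint (ρ' b'), adjoint_lifting_eq_lifting_star hE hρ hb', ← adjoint_comp,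
      hρ hz _ (star_mem hb'), adjoint_comp, ← star_eq_adjoint, star_star]
  calc b' * (adjoint z ∘L w) = adjoint z ∘L (ρ' b' ∘L w) := by
        rw [mul_def, ← comp_assoc, hzb', comp_assoc]
    _ = adjoint z ∘L w * b' := by rw [hw b' hb']; rfl

def toSubmodule_s4 (hE : IsConcreteVNModule B E) : Submodule ℂ (G →L[ℂ] H) where
  carrier := E
  add_mem' hx hy := hE.add_mem _ hx _ hy
  zero_mem' := hE.zero_mem
  smul_mem' c _ hx := hE.smul_mem c _ hx

theorem tupleEval_mem_closure (hE : IsConcreteVNModule B E)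
    (hρ : E ⊆ intertwinerSpace B.commutant ρ') {w : G →L[ℂ] H}
    (hw : w ∈ intertwinerSpace B.commutant ρ') {ι : Type*} [Fintype ι] (g : ι → G) :
    tupleEval g w ∈ (hE.toSubmodule_s4.map (tupleEval g)).topologicalClosure := by
  set V := hE.toSubmodule_s4.map (tupleEval g)
  set K := V.topologicalClosure
  set ξ := tupleEval g w
  set η := ξ - K.starProjection ξ
  have hη : η ∈ Kᗮ := K.sub_starProjection_mem_orthogonal ξ
  suffices η = 0 by
    rw [sub_eq_zero.mp this]
    exact K.starProjection_apply_mem ξ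
  have hη_adjoint : ∀ z ∈ E, adjoint (diagonalOp ι z) η = 0 := by
    intro z hz
    set T := diagonalOp ι z
    have hT : ∀ y, T (adjoint T (tupleEval g y)) = tupleEval g (z ∘L adjoint z ∘L y) := by
      intro y; ext i; simp [T, adjoint_diagonalOp]
    have hVK : V ≤ K.comap (T ∘L adjoint T).toLinearMap := by
      rintro _ ⟨y, hy, rfl⟩
      exact V.le_topologicalClosure (hT y ▸ Submodule.mem_map_of_mem
        (hE.comp_mem z hz _ (hE.adjoint_comp_mem z hz y hy)))
    have hKK : K ≤ K.comap (T ∘L adjoint T).toLinearMap :=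
      V.topologicalClosure_minimal hVK
        (V.isClosed_topologicalClosure.preimage (T ∘L adjoint T).continuous)
    have hTη : T (adjoint T η) ∈ K := by
      rw [map_sub, map_sub, hT]
      exact K.sub_mem (V.le_topologicalClosure (Submodule.mem_map_of_mem
        (hE.comp_mem z hz _ (hE.adjoint_comp_mem_of_mem_intertwinerSpace hρ hw hz))))
        (hKK (K.starProjection_apply_mem ξ))
    rw [← inner_self_eq_zero (𝕜 := ℂ), adjoint_inner_left]
    exact K.inner_left_of_mem_orthogonal hTη hη
  ext i
  refine hE.dense.eq_zero_of_forall_adjoint_apply_eq_zero fun z hz => ?_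
  simpa [adjoint_diagonalOp] using congr($(hη_adjoint z hz) i)

theorem intertwinerSpace_subset (hE : IsConcreteVNModule B E)
    (hρ : E ⊆ intertwinerSpace B.commutant ρ') : intertwinerSpace B.commutant ρ' ⊆ E := by
  intro w hw
  refine @IsClosed.closure_subset _ (wot G H) E hE.isClosed w
    (mem_closure_wot_of_forall_finite fun s hs δ hδ => ?_)
  have := hs.fintype
  let γ : s → G := (↑)
  have hwV := hE.tupleEval_mem_closure hρ hw γ
  rw [← SetLike.mem_coe, Submodule.topologicalClosure_coe] at hwV
  obtain ⟨_, ⟨y, hy, rfl⟩, hyw⟩ := Metric.mem_closure_iff.mp hwV δ hδ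
  refine ⟨y, hy, fun x hx => ?_⟩
  calc ‖y x - w x‖ = ‖(tupleEval γ w - tupleEval γ y) ⟨x, hx⟩‖ := by
        rw [norm_sub_rev]; rfl
    _ ≤ ‖tupleEval γ w - tupleEval γ y‖ := PiLp.norm_apply_le _ _
    _ < δ := by rwa [← dist_eq_norm]

theorem commute_adjoint (hE : IsConcreteVNModule B E)
    (hρ : E ⊆ intertwinerSpace B.commutant ρ') {a : H →L[ℂ] H}
    (ha : ∀ b' ∈ B.commutant, Commute a (ρ' b')) :
    ∀ b' ∈ B.commutant, Commute (adjoint a) (ρ' b') := fun b' hb' => by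
  have := (ha _ (star_mem hb')).star_star
  rwa [star_eq_adjoint (ρ' _), adjoint_lifting_eq_lifting_star hE hρ (star_mem hb'), star_star,
    star_eq_adjoint] at this

end IsConcreteVNModule

/-- the algebra of adjointable operators of `E`, realized in `B(H)`, equals the
commutant of `ρ'(B')` in `B(H)`. -/
theorem stmt4 (B : VonNeumannAlgebra G) (E : Set (G →L[ℂ] H))
    (hE : IsConcreteVNModule B E)
    (ρ' : (G →L[ℂ] G) → (H →L[ℂ] H))
    (hρ : ∀ b' ∈ B.commutant, ∀ x ∈ E, (ρ' b').comp x = x.comp b') :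
    {a : H →L[ℂ] H | ∀ x ∈ E, a.comp x ∈ E ∧ (ContinuousLinearMap.adjoint a).comp x ∈ E}
      = {a : H →L[ℂ] H | ∀ b' ∈ B.commutant, a * ρ' b' = ρ' b' * a} := by
  have hρE : E ⊆ intertwinerSpace B.commutant ρ' := fun x hx b' hb' => hρ b' hb' x hx
  ext a
  refine ⟨fun ha => hE.dense.commute_of_comp_mem hρE fun x hx => (ha x hx).1, fun ha x hx => ?_⟩
  exact ⟨hE.intertwinerSpace_subset hρE (comp_mem_intertwinerSpace ha (hρE hx)),
    hE.intertwinerSpace_subset hρE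
      (comp_mem_intertwinerSpace (hE.commute_adjoint hρE ha) (hρE hx))⟩
end
end

section
/- Let B be a von Neumann algebra on a complex Hilbert space G, and let E ⊆ B(G,H) be a complex linear subspace such that x∘b ∈ E for all x ∈ E, b ∈ B, x*∘y ∈ B for all x, y ∈ E, and span{x g : x ∈ E, g ∈ G} is dense in H (E is not assumed WOT-closed). Let ρ' : B' → B(H) be the commutant lifting of E. Then the closure of E in the weak operator topology of B(G,H) equals {y ∈ B(G,H) : ρ'(b') ∘ y = y ∘ b' for all b' ∈ B'}. -/
noncomputable section

variable {G H K : Type*}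
  [NormedAddCommGroup G] [InnerProductSpace ℂ G] [CompleteSpace G]
  [NormedAddCommGroup H] [InnerProductSpace ℂ H] [CompleteSpace H]
  [NormedAddCommGroup K] [InnerProductSpace ℂ K] [CompleteSpace K]

/-! The intertwiners of `ρ'` form a WOT-closed set containing `E`. Conversely, an intertwiner `y`
only has to be approximated on finitely many vectors `g₁, …, gₙ`, and this is done by
amplification: let `P` be the projection of `Gⁿ` onto the closure of `{(b gᵢ)ᵢ : b ∈ B}`. This
subspace is invariant under the `*`-algebra `Bⁿ`, so `P` commutes with `Bⁿ` and its matrix entries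
`pᵢⱼ` lie in `B'`. The columns of the matrix `(ρ' pᵢⱼ)` map each `x g` (`x ∈ E`) to
`(x (P (0, …, g, …, 0))ᵢ)ᵢ`, which lies in the closure `D` of `{(x gᵢ)ᵢ : x ∈ E}`, hence by density
map all of `H` into `D`. Since `P` fixes `(gᵢ)ᵢ`, the vector `(y gᵢ)ᵢ` is a sum of such column
images, so it lies in `D`. -/

open scoped InnerProductSpace
open Filter Topology

section Amplification

variable {X Y : Type*} [NormedAddCommGroup X] [InnerProductSpace ℂ X]
  [NormedAddCommGroup Y] [InnerProductSpace ℂ Y] {ι : Type*}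

namespace ContinuousLinearMap

variable (ι) in
def amplify (T : X →L[ℂ] Y) : PiLp 2 (fun _ : ι => X) →L[ℂ] PiLp 2 (fun _ : ι => Y) :=
  (PiLp.continuousLinearEquiv 2 ℂ (fun _ : ι => Y)).symm.toContinuousLinearMap ∘L
    ContinuousLinearMap.pi (fun i => T ∘L PiLp.proj 2 (fun _ : ι => X) i)

@[simp]
lemma amplify_apply (T : X →L[ℂ] Y) (v : PiLp 2 (fun _ : ι => X)) (i : ι) :
    amplify ι T v i = T (v i) := rfl

lemma amplify_single [DecidableEq ι] (T : X →L[ℂ] Y) (j : ι) (x : X) :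
    amplify ι T (PiLp.single 2 j x) = PiLp.single 2 j (T x) := by
  ext i
  by_cases h : i = j
  · subst h; simp
  · simp [h]

lemma adjoint_amplify [Fintype ι] [CompleteSpace X] [CompleteSpace Y] (T : X →L[ℂ] Y) :
    adjoint (amplify ι T) = amplify ι (adjoint T) :=
  ((eq_adjoint_iff _ _).2 fun v w => by
    simp only [PiLp.inner_apply, amplify_apply, adjoint_inner_left]).symm

def evalAt (g : ι → X) : (X →L[ℂ] Y) →ₗ[ℂ] PiLp 2 (fun _ : ι => Y) where
  toFun x := WithLp.toLp 2 fun i => x (g i)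
  map_add' _ _ := rfl
  map_smul' _ _ := rfl

lemma amplify_mem_topologicalClosure_map [Fintype ι] {M : Submodule ℂ (X →L[ℂ] X)}
    {N : Submodule ℂ (X →L[ℂ] Y)} (g : ι → X) {x : X →L[ℂ] Y} (hx : ∀ b ∈ M, x ∘L b ∈ N)
    {v : PiLp 2 (fun _ : ι => X)} (hv : v ∈ (M.map (evalAt g)).topologicalClosure) :
    amplify ι x v ∈ (N.map (evalAt g)).topologicalClosure := by
  refine Submodule.topologicalClosure_mono ?_
    (Submodule.topologicalClosure_map (amplify ι x) _ ⟨v, hv, rfl⟩)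
  rintro _ ⟨_, ⟨b, hb, rfl⟩, rfl⟩
  exact ⟨x ∘L b, hx b hb, rfl⟩

variable [DecidableEq ι]

def entry (P : PiLp 2 (fun _ : ι => X) →L[ℂ] PiLp 2 (fun _ : ι => X)) (i j : ι) : X →L[ℂ] X :=
  PiLp.proj 2 (fun _ : ι => X) i ∘L P ∘L
    (PiLp.continuousLinearEquiv 2 ℂ (fun _ : ι => X)).symm.toContinuousLinearMap ∘L
      ContinuousLinearMap.single ℂ (fun _ : ι => X) j

lemma entry_apply (P : PiLp 2 (fun _ : ι => X) →L[ℂ] PiLp 2 (fun _ : ι => X)) (i j : ι)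
    (x : X) : entry P i j x = P (PiLp.single 2 j x) i := rfl

lemma apply_eq_sum_entry [Fintype ι] (P : PiLp 2 (fun _ : ι => X) →L[ℂ] PiLp 2 (fun _ : ι => X))
    (v : PiLp 2 (fun _ : ι => X)) (i : ι) : P v i = ∑ j, entry P i j (v j) := by
  have hv : ∑ j, PiLp.single 2 j (v j) = v := by ext; simp
  conv_lhs => rw [← hv, map_sum]
  simp [entry_apply]

lemma entry_mem_centralizer {S : Set (X →L[ℂ] X)}
    {P : PiLp 2 (fun _ : ι => X) →L[ℂ] PiLp 2 (fun _ : ι => X)}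
    (hP : ∀ b ∈ S, Commute P (amplify ι b)) (i j : ι) : entry P i j ∈ S.centralizer := by
  intro b hb
  ext x
  calc b (P (PiLp.single 2 j x) i) = (amplify ι b * P) (PiLp.single 2 j x) i := rfl
    _ = P (amplify ι b (PiLp.single 2 j x)) i := by rw [← (hP b hb).eq]; rfl
    _ = P (PiLp.single 2 j (b x)) i := by rw [amplify_single]

end ContinuousLinearMap

end Amplification

lemma Submodule.commute_starProjection_of_mem_invtSubmodule {X : Type*} [NormedAddCommGroup X]
    [InnerProductSpace ℂ X] [CompleteSpace X] {T : X →L[ℂ] X} (V : Submodule ℂ X)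
    [V.HasOrthogonalProjection] (hT : V ∈ Module.End.invtSubmodule T)
    (hT' : V ∈ Module.End.invtSubmodule (ContinuousLinearMap.adjoint T)) :
    Commute V.starProjection T :=
  (ContinuousLinearMap.IsIdempotentElem.commute_iff V.isIdempotentElem_starProjection).2
    ⟨by rwa [Submodule.range_starProjection], by
      rw [Submodule.ker_starProjection]
      exact ContinuousLinearMap.orthogonal_mem_invtSubmodule hT'⟩

section Approximation

open ContinuousLinearMap

variable {X Y : Type*} [NormedAddCommGroup X] [InnerProductSpace ℂ X] [CompleteSpace X]
  [NormedAddCommGroup Y] [InnerProductSpace ℂ Y] {ι : Type*} [Fintype ι]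

lemma commute_starProjection_amplify (B : StarSubalgebra ℂ (X →L[ℂ] X)) (g : ι → X)
    {b : X →L[ℂ] X} (hb : b ∈ B) :
    Commute (B.toSubalgebra.toSubmodule.map (evalAt g)).topologicalClosure.starProjection
      (amplify ι b) := by
  have hinv : ∀ {a}, a ∈ B → (B.toSubalgebra.toSubmodule.map (evalAt g)).topologicalClosure ∈
      Module.End.invtSubmodule (amplify ι a) := fun ha =>
    (Module.End.mem_invtSubmodule_iff_forall_mem_of_mem _).2 fun v hv =>
      amplify_mem_topologicalClosure_map g (fun b₁ hb₁ => mul_mem ha hb₁) hv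
  refine Submodule.commute_starProjection_of_mem_invtSubmodule _ (hinv hb) ?_
  rw [adjoint_amplify]
  exact hinv (star_mem hb)

theorem evalAt_mem_topologicalClosure_of_mem_intertwinerSpace
    (B : StarSubalgebra ℂ (X →L[ℂ] X)) (E : Submodule ℂ (X →L[ℂ] Y))
    (hcomp : ∀ x ∈ E, ∀ b ∈ B, x ∘L b ∈ E) (hdense : SpansDensely (E : Set (X →L[ℂ] Y)))
    {ρ : (X →L[ℂ] X) → (Y →L[ℂ] Y)}
    (hE : (E : Set (X →L[ℂ] Y)) ⊆ intertwinerSpace (Set.centralizer B) ρ)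
    {y : X →L[ℂ] Y} (hy : y ∈ intertwinerSpace (Set.centralizer B) ρ) (g : ι → X) :
    evalAt g y ∈ (E.map (evalAt g)).topologicalClosure := by
  classical
  set V := (B.toSubalgebra.toSubmodule.map (evalAt g)).topologicalClosure
  set P := V.starProjection
  set D := (E.map (evalAt g)).topologicalClosure
  have hp : ∀ i j, entry P i j ∈ Set.centralizer B :=
    entry_mem_centralizer fun b hb => commute_starProjection_amplify B g hb
  let col (j : ι) : Y →L[ℂ] PiLp 2 (fun _ : ι => Y) :=
    (PiLp.continuousLinearEquiv 2 ℂ _).symm.toContinuousLinearMap ∘L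
      ContinuousLinearMap.pi fun i => ρ (entry P i j)
  have hcol : ∀ j h, col j h ∈ D := by
    intro j
    have hgen : Submodule.span ℂ {h | ∃ x ∈ E, ∃ g', x g' = h} ≤
        D.comap (col j : Y →ₗ[ℂ] PiLp 2 (fun _ : ι => Y)) := by
      refine Submodule.span_le.2 ?_
      rintro _ ⟨x, hx, g', rfl⟩
      have hx' : col j (x g') = amplify ι x (P (PiLp.single 2 j g')) := by
        ext i
        exact congr($(hE hx _ (hp i j)) g')
      rw [SetLike.mem_coe, Submodule.mem_comap, ContinuousLinearMap.coe_coe, hx']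
      exact amplify_mem_topologicalClosure_map g (hcomp x hx) (V.starProjection_apply_mem _)
    intro h
    exact closure_minimal hgen ((Submodule.isClosed_topologicalClosure _).preimage
      (col j).continuous) (hdense.closure_eq ▸ Set.mem_univ h)
  have hfix : P (evalAt g 1) = evalAt g 1 :=
    Submodule.starProjection_eq_self_iff.2 (Submodule.le_topologicalClosure _ ⟨1, one_mem B, rfl⟩)
  have hsum : evalAt g y = ∑ j, col j (y (g j)) := by
    ext i
    calc y (g i) = y (P (evalAt g 1) i) := by rw [hfix]; rfl
      _ = ∑ j, y (entry P i j (g j)) := by rw [apply_eq_sum_entry, map_sum]; rfl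
      _ = ∑ j, ρ (entry P i j) (y (g j)) :=
        Finset.sum_congr rfl fun j _ => congr($(hy _ (hp i j)) (g j)).symm
      _ = _ := by simp [col]
  rw [hsum]
  exact sum_mem fun j _ => hcol j _

end Approximation

section WeakOperatorTopology

open ContinuousLinearMap

variable {X Y : Type*} [NormedAddCommGroup X] [InnerProductSpace ℂ X]
  [NormedAddCommGroup Y] [InnerProductSpace ℂ Y]

lemma tendsto_wot_iff {α : Type*} {l : Filter α} {f : α → X →L[ℂ] Y} {y : X →L[ℂ] Y} :
    Tendsto f l (@nhds _ (wot X Y) y) ↔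
      ∀ x v, Tendsto (fun a => ⟪v, f a x⟫_ℂ) l (𝓝 ⟪v, y x⟫_ℂ) := by
  rw [wot, nhds_iInf, tendsto_iInf]
  simp only [nhds_induced, tendsto_comap_iff, Prod.forall]
  rfl

lemma continuous_wot_inner_apply (x : X) (v : Y) :
    Continuous[wot X Y, _] fun T : X →L[ℂ] Y => ⟪v, T x⟫_ℂ :=
  continuous_iInf_dom (i := (x, v)) continuous_induced_dom

lemma isClosed_wot_intertwinerSpace [CompleteSpace Y] (S : Set (X →L[ℂ] X))
    (ρ : (X →L[ℂ] X) → (Y →L[ℂ] Y)) : IsClosed[wot X Y] (intertwinerSpace S ρ) := by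
  let _ := wot X Y
  have hset : intertwinerSpace S ρ = ⋂ b ∈ S, ⋂ p : X × Y,
      {y : X →L[ℂ] Y | ⟪adjoint (ρ b) p.2, y p.1⟫_ℂ = ⟪p.2, y (b p.1)⟫_ℂ} := by
    ext y
    simp only [Set.mem_iInter, Prod.forall, Set.mem_ofPred, adjoint_inner_left]
    refine forall₂_congr fun b _ => ContinuousLinearMap.ext_iff.trans ?_
    exact forall_congr' fun x => ext_iff_inner_left ℂ
  rw [hset]
  exact isClosed_biInter fun b _ => isClosed_iInter fun p =>
    isClosed_eq (continuous_wot_inner_apply _ _) (continuous_wot_inner_apply _ _)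

lemma mem_wot_closure_of_forall_finset {S : Submodule ℂ (X →L[ℂ] Y)} {y : X →L[ℂ] Y}
    (h : ∀ s : Finset X,
      evalAt ((↑) : s → X) y ∈ (S.map (evalAt ((↑) : s → X))).topologicalClosure) :
    y ∈ closure[wot X Y] (S : Set (X →L[ℂ] Y)) := by
  have happrox : ∀ p : Finset X × ℕ, ∃ x ∈ S, ∀ g ∈ p.1, dist (x g) (y g) < 1 / (p.2 + 1) := by
    rintro ⟨s, n⟩
    obtain ⟨_, ⟨x, hx, rfl⟩, hdist⟩ :=
      Metric.mem_closure_iff.1 (h s) (1 / (n + 1)) Nat.one_div_pos_of_nat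
    refine ⟨x, hx, fun g hg => ?_⟩
    rw [dist_comm]
    exact (PiLp.dist_apply_le _ _ ⟨g, hg⟩).trans_lt hdist
  classical
  choose x hxS hx using happrox
  have hpointwise : ∀ g, Tendsto (fun p => x p g) atTop (𝓝 (y g)) := fun g =>
    Metric.tendsto_atTop.2 fun ε hε => by
      obtain ⟨n, hn⟩ := exists_nat_one_div_lt hε
      refine ⟨({g}, n), fun p hp => (hx p g (hp.1 (Finset.mem_singleton_self g))).trans ?_⟩
      calc 1 / ((p.2 : ℝ) + 1) ≤ 1 / ((n : ℝ) + 1) := by gcongr; exact_mod_cast hp.2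
        _ < ε := hn
  exact @mem_closure_of_tendsto _ (wot X Y) _ _ _ _ _ _
    (tendsto_wot_iff.2 fun g v => tendsto_const_nhds.inner (hpointwise g))
    (Eventually.of_forall hxS)

end WeakOperatorTopology

theorem stmt5_general (B : VonNeumannAlgebra G) (E : Submodule ℂ (G →L[ℂ] H))
    (hcomp : ∀ x ∈ E, ∀ b ∈ B, ContinuousLinearMap.comp x b ∈ E)
    (hdense : SpansDensely (E : Set (G →L[ℂ] H)))
    (ρ' : (G →L[ℂ] G) → (H →L[ℂ] H))
    (hρ : ∀ b' ∈ B.commutant, ∀ x ∈ E, (ρ' b').comp x = x.comp b') :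
    @closure _ (wot G H) (E : Set (G →L[ℂ] H))
      = {y : G →L[ℂ] H | ∀ b' ∈ B.commutant, (ρ' b').comp y = y.comp b'} := by
  have hE : (E : Set (G →L[ℂ] H)) ⊆ intertwinerSpace B.commutant ρ' :=
    fun x hx b' hb' => hρ b' hb' x hx
  refine subset_antisymm (@closure_minimal _ (wot G H) _ _ hE
    (isClosed_wot_intertwinerSpace _ ρ')) fun y hy => ?_
  rw [VonNeumannAlgebra.coe_commutant] at hE
  exact mem_wot_closure_of_forall_finset fun s =>
    evalAt_mem_topologicalClosure_of_mem_intertwinerSpace B.toStarSubalgebra E hcomp hdense hE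
      (B.coe_commutant ▸ hy) _

/-- the WOT-closure of a (not necessarily closed) pre-von Neumann `B`-module `E`
equals the intertwiner space of its commutant lifting. -/
theorem stmt5 (B : VonNeumannAlgebra G) (E : Submodule ℂ (G →L[ℂ] H))
    (hcomp : ∀ x ∈ E, ∀ b ∈ B, ContinuousLinearMap.comp x b ∈ E)
    (hadj : ∀ x ∈ E, ∀ y ∈ E, (ContinuousLinearMap.adjoint x).comp y ∈ B)
    (hdense : SpansDensely (E : Set (G →L[ℂ] H)))
    (ρ' : (G →L[ℂ] G) → (H →L[ℂ] H))
    (hρ : ∀ b' ∈ B.commutant, ∀ x ∈ E, (ρ' b').comp x = x.comp b') :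
    @closure _ (wot G H) (E : Set (G →L[ℂ] H))
      = {y : G →L[ℂ] H | ∀ b' ∈ B.commutant, (ρ' b').comp y = y.comp b'} :=
  stmt5_general B E hcomp hdense ρ' hρ
end
end

section
/- Let G and H be complex Hilbert spaces and let E ⊆ B(G,H) be a complex linear subspace that is closed in the weak operator topology, satisfies x∘a ∈ E for all x ∈ E and a ∈ B(G), and is such that span{x g : x ∈ E, g ∈ G} is dense in H. Then E = B(G,H). (In other words, every concrete von Neumann module over the full operator algebra B(G) is all of B(G,H).) -/
noncomputable section

variable {G H K : Type*}
  [NormedAddCommGroup G] [InnerProductSpace ℂ G] [CompleteSpace G]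
  [NormedAddCommGroup H] [InnerProductSpace ℂ H] [CompleteSpace H]
  [NormedAddCommGroup K] [InnerProductSpace ℂ K] [CompleteSpace K]

/-!
Since `x ∘ |u⟩⟨g| = |x u⟩⟨g|`, the vectors `h` with `|h⟩⟨g| ∈ E` form a subspace containing every
`x u` with `x ∈ E`; it is norm closed because `E` is, so by density `E` contains every rank-one
operator. An orthogonal projection `P_U` onto a finite-dimensional subspace is a finite sum of
rank-one operators, so `T ∘ P_U ∈ E` for every `T`. As `U` runs through the spans of finite sets,
`T ∘ P_U` converges to `T` pointwise, hence weakly, and `E` is weakly closed.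
-/

open Filter Topology InnerProductSpace

section

variable {V W : Type*} [NormedAddCommGroup V] [InnerProductSpace ℂ V]
  [NormedAddCommGroup W] [InnerProductSpace ℂ W]

lemma isClosed_of_isClosed_wot {s : Set (V →L[ℂ] W)} (hs : IsClosed[wot V W] s) : IsClosed s := by
  refine hs.mono (le_iInf fun p => ?_)
  rw [← continuous_iff_le_induced]
  exact (innerSL ℂ p.2).continuous.comp (ContinuousLinearMap.apply ℂ W p.1).continuous

lemma tendsto_wot_of_tendsto_apply {ι : Type*} {l : Filter ι} {f : ι → V →L[ℂ] W}
    {T : V →L[ℂ] W} (hf : ∀ v, Tendsto (fun i => f i v) l (𝓝 (T v))) :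
    Tendsto f l (@nhds _ (wot V W) T) := by
  rw [wot, nhds_iInf, tendsto_iInf]
  intro p
  rw [nhds_induced, tendsto_comap_iff]
  exact ((innerSL ℂ p.2).continuous.tendsto _).comp (hf p.1)

lemma rankOne_mem_of_spansDensely {E : Submodule ℂ (V →L[ℂ] W)}
    (hclosed : IsClosed (E : Set (V →L[ℂ] W))) (hcomp : ∀ x ∈ E, ∀ a : V →L[ℂ] V, x ∘L a ∈ E)
    (hdense : SpansDensely (E : Set (V →L[ℂ] W))) (w : W) (v : V) : rankOne ℂ w v ∈ E := by
  let L : W →L[ℂ] V →L[ℂ] W := (rankOne ℂ).flip v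
  let S : Set W := {w | ∃ x ∈ (E : Set (V →L[ℂ] W)), ∃ u : V, x u = w}
  have hspan : Submodule.span ℂ S ≤ E.comap (L : W →ₗ[ℂ] V →L[ℂ] W) := by
    rw [Submodule.span_le]
    rintro _ ⟨x, hx, u, rfl⟩
    simpa [L, comp_rankOne] using hcomp x hx (rankOne ℂ u v)
  have hclosure : closure (Submodule.span ℂ S : Set W) ⊆ L ⁻¹' E :=
    closure_minimal (fun _ hw => hspan hw) (hclosed.preimage L.continuous)
  exact hclosure (hdense.closure_eq ▸ Set.mem_univ w)

lemma comp_starProjection_mem {E : Submodule ℂ (V →L[ℂ] W)}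
    (hrankOne : ∀ w v, rankOne ℂ w v ∈ E) (T : V →L[ℂ] W) (U : Submodule ℂ V)
    [FiniteDimensional ℂ U] : T ∘L U.starProjection ∈ E := by
  rw [(stdOrthonormalBasis ℂ U).starProjection_eq_sum_rankOne, ContinuousLinearMap.comp_finsetSum]
  refine Submodule.sum_mem E fun i _ => ?_
  rw [comp_rankOne]
  exact hrankOne _ _

lemma tendsto_comp_starProjection_span (T : V →L[ℂ] W) :
    Tendsto (fun s : Finset V => T ∘L (Submodule.span ℂ (s : Set V)).starProjection) atTop
      (@nhds _ (wot V W) T) := by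
  refine tendsto_wot_of_tendsto_apply fun v => tendsto_const_nhds.congr' ?_
  filter_upwards [eventually_ge_atTop {v}] with s hs
  have hv : v ∈ Submodule.span ℂ (s : Set V) :=
    Submodule.subset_span (hs (Finset.mem_singleton_self v))
  simp [Submodule.starProjection_eq_self_iff.mpr hv]

end

/-- a WOT-closed subspace `E ⊆ B(G,H)` with `x ∘ a ∈ E` for every `a ∈ B(G)`
and acting nondegenerately on `G` is all of `B(G,H)`. -/
theorem stmt7 (E : Submodule ℂ (G →L[ℂ] H))
    (hclosed : @IsClosed _ (wot G H) (E : Set (G →L[ℂ] H)))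
    (hcomp : ∀ x ∈ E, ∀ a : G →L[ℂ] G, ContinuousLinearMap.comp x a ∈ E)
    (hdense : SpansDensely (E : Set (G →L[ℂ] H))) :
    (E : Set (G →L[ℂ] H)) = Set.univ := by
  have hrankOne := rankOne_mem_of_spansDensely (isClosed_of_isClosed_wot hclosed) hcomp hdense
  refine Set.eq_univ_of_forall fun T => ?_
  exact @IsClosed.mem_of_tendsto _ (wot G H) _ _ _ _ _ _ hclosed
    (tendsto_comp_starProjection_span T)
    (Eventually.of_forall fun s => comp_starProjection_mem hrankOne T _)
end
end
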